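/- With the explicit action s_k * A = {α_k} ∪ {β ∈ Φ⁺ : (β−α_k ∈ A if (α_k,β)=1), (β ∈ A if (α_k,β)=0), (β ∈ A and β+α_k ∈ A if (α_k,β)=−1)}, if A ⊆ Φ⁺ is closed then s_k * A is closed, and moreover α_k ∈ s_k * A ⊆ {α_k} ∪ r_k(A). -/
import Mathlib


/-- The fundamental root `α_i`, written in coordinates with respect to the basis of
fundamental roots. -/
def esingle {n : ℕ} (i : Fin n) : Fin n → ℤ := Pi.single i 1

/-- A finite crystallographic simply-laced root system (type `A`, `D` or `E`),
given by the Gram matrix `C` of the fundamental roots `α_1, …, α_n` (all of squared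
length 2):  `C i j = (α_i, α_j)`, which is `2` on the diagonal and `0` or `-1` off
the diagonal, and is positive definite.  Roots are coordinatized in the root
lattice `ℤⁿ`; the inner product is `ip`, and the positive roots are exactly the
lattice vectors of squared length `2` with nonnegative coordinates. -/
structure ADE (n : ℕ) where
  C : Matrix (Fin n) (Fin n) ℤ
  symm : ∀ i j, C i j = C j i
  diag : ∀ i, C i i = 2
  offdiag : ∀ i j, i ≠ j → C i j = 0 ∨ C i j = -1
  posdef : ∀ v : Fin n → ℤ, v ≠ 0 → 0 < ∑ i, ∑ j, v i * C i j * v j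

namespace ADE

variable {n : ℕ}

/-- The inner product `( , )` on the root lattice. -/
def ip (X : ADE n) (v w : Fin n → ℤ) : ℤ := ∑ i, ∑ j, v i * X.C i j * w j

/-- The set `Φ⁺` of positive roots: the lattice vectors of squared length `2`
all of whose coordinates (with respect to the fundamental roots) are nonnegative. -/
def Pos (X : ADE n) : Set (Fin n → ℤ) :=
  {β | β ≠ 0 ∧ (∀ j, 0 ≤ β j) ∧ X.ip β β = 2}

/-- The height `ht(β)`: the sum of the coefficients of `β` with respect to the
fundamental roots. -/
def htZ (β : Fin n → ℤ) : ℤ := ∑ j, β j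

end ADE

namespace ADE

variable {n : ℕ}

/-- A subset `A ⊆ Φ⁺` is closed if `α, β ∈ A` and `α + β ∈ Φ⁺` imply `α + β ∈ A`. -/
def IsClosedSub (X : ADE n) (A : Set (Fin n → ℤ)) : Prop :=
  A ⊆ X.Pos ∧ ∀ a ∈ A, ∀ b ∈ A, a + b ∈ X.Pos → a + b ∈ A

/-- The fundamental reflection `r_k : v ↦ v - (α_k, v) α_k`. -/
def srefl (X : ADE n) (k : Fin n) (v : Fin n → ℤ) : Fin n → ℤ :=
  v - X.ip (esingle k) v • esingle k

/-- The action `s_k * A` of the Artin generator `s_k` on subsets of `Φ⁺`: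
`s_k * A = {α_k} ∪ {β ∈ Φ⁺ : β - α_k ∈ A if (α_k,β) = 1; β ∈ A if (α_k,β) = 0;
β ∈ A and β + α_k ∈ A if (α_k,β) = -1}`. -/
def skStar (X : ADE n) (k : Fin n) (A : Set (Fin n → ℤ)) : Set (Fin n → ℤ) :=
  {esingle k} ∪
    {β | β ∈ X.Pos ∧
      ((X.ip (esingle k) β = 1 ∧ β - esingle k ∈ A) ∨
       (X.ip (esingle k) β = 0 ∧ β ∈ A) ∨
       (X.ip (esingle k) β = -1 ∧ β ∈ A ∧ β + esingle k ∈ A))}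

end ADE

namespace ADE

variable {n : ℕ}

lemma ip_add_left (X : ADE n) (u v w : Fin n → ℤ) :
    X.ip (u + v) w = X.ip u w + X.ip v w := by
  simp [ip, add_mul, Finset.sum_add_distrib]

lemma ip_add_right (X : ADE n) (u v w : Fin n → ℤ) :
    X.ip u (v + w) = X.ip u v + X.ip u w := by
  simp [ip, mul_add, Finset.sum_add_distrib]

lemma ip_sub_left (X : ADE n) (u v w : Fin n → ℤ) :
    X.ip (u - v) w = X.ip u w - X.ip v w := by
  simp [ip, sub_mul, Finset.sum_sub_distrib]

lemma ip_sub_right (X : ADE n) (u v w : Fin n → ℤ) :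
    X.ip u (v - w) = X.ip u v - X.ip u w := by
  simp [ip, mul_sub, Finset.sum_sub_distrib]

lemma ip_comm (X : ADE n) (v w : Fin n → ℤ) : X.ip v w = X.ip w v := by
  unfold ip
  rw [Finset.sum_comm]
  refine Finset.sum_congr rfl fun j _ => Finset.sum_congr rfl fun i _ => ?_
  rw [X.symm i j]; ring

lemma ip_expand_add (X : ADE n) (a b : Fin n → ℤ) :
    X.ip (a + b) (a + b) = X.ip a a + 2 * X.ip a b + X.ip b b := by
  rw [ip_add_left, ip_add_right, ip_add_right, X.ip_comm b a]; ring

lemma ip_expand_sub (X : ADE n) (a b : Fin n → ℤ) :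
    X.ip (a - b) (a - b) = X.ip a a - 2 * X.ip a b + X.ip b b := by
  rw [ip_sub_left, ip_sub_right, ip_sub_right, X.ip_comm b a]; ring

lemma ip_single_left (X : ADE n) (k : Fin n) (w : Fin n → ℤ) :
    X.ip (esingle k) w = ∑ j, X.C k j * w j := by
  unfold ip esingle
  rw [Finset.sum_eq_single k]
  · simp
  · intro i _ hik; simp [Pi.single_apply, hik]
  · simp

lemma ip_single_self (X : ADE n) (k : Fin n) :
    X.ip (esingle k) (esingle k) = 2 := by
  rw [ip_single_left]
  unfold esingle
  rw [Finset.sum_eq_single k]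
  · simp [X.diag]
  · intro j _ hjk; simp [Pi.single_apply, hjk.symm]
  · simp

lemma mem_Pos (X : ADE n) {β : Fin n → ℤ} (h0 : ∀ j, 0 ≤ β j)
    (h2 : X.ip β β = 2) : β ∈ X.Pos := by
  refine ⟨?_, h0, h2⟩
  rintro rfl
  simp [ip] at h2

lemma esingle_mem_pos (X : ADE n) (k : Fin n) : esingle k ∈ X.Pos := by
  refine X.mem_Pos (fun j => ?_) (X.ip_single_self k)
  unfold esingle
  rw [Pi.single_apply]
  split <;> norm_num

lemma ip_le_two (X : ADE n) {a b : Fin n → ℤ}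
    (ha : X.ip a a = 2) (hb : X.ip b b = 2) : X.ip a b ≤ 2 := by
  rcases eq_or_ne a b with rfl | h
  · omega
  · have h2 : 0 < X.ip (a - b) (a - b) := X.posdef _ (sub_ne_zero.mpr h)
    rw [ip_expand_sub, ha, hb] at h2; omega

lemma eq_of_ip_eq_two (X : ADE n) {a b : Fin n → ℤ}
    (ha : X.ip a a = 2) (hb : X.ip b b = 2) (h : X.ip a b = 2) : a = b := by
  by_contra hne
  have h2 : 0 < X.ip (a - b) (a - b) := X.posdef _ (sub_ne_zero.mpr hne)
  rw [ip_expand_sub, ha, hb, h] at h2; omega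

lemma add_ne_zero_of_pos (X : ADE n) {a b : Fin n → ℤ}
    (ha : a ∈ X.Pos) (hb : b ∈ X.Pos) : a + b ≠ 0 := by
  obtain ⟨ha0, haj, -⟩ := ha
  obtain ⟨-, hbj, -⟩ := hb
  intro h
  apply ha0
  funext j
  have h1 := congrFun h j
  have h2 := haj j
  have h3 := hbj j
  simp only [Pi.add_apply, Pi.zero_apply] at h1 ⊢
  omega

lemma neg_one_le_ip (X : ADE n) {a b : Fin n → ℤ}
    (ha : a ∈ X.Pos) (hb : b ∈ X.Pos) : -1 ≤ X.ip a b := by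
  have h : 0 < X.ip (a + b) (a + b) := X.posdef _ (X.add_ne_zero_of_pos ha hb)
  rw [ip_expand_add, ha.2.2, hb.2.2] at h; omega

lemma ip_eq_neg_one (X : ADE n) {a b : Fin n → ℤ}
    (ha : a ∈ X.Pos) (hb : b ∈ X.Pos) (hab : a + b ∈ X.Pos) :
    X.ip a b = -1 := by
  have h := hab.2.2
  rw [ip_expand_add, ha.2.2, hb.2.2] at h; omega

lemma coord_pos (X : ADE n) {k : Fin n} {β : Fin n → ℤ} (hβ : β ∈ X.Pos)
    (h : 0 < X.ip (esingle k) β) : 1 ≤ β k := by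
  rw [ip_single_left] at h
  by_contra hk
  push_neg at hk
  have hsum : ∑ j, X.C k j * β j ≤ 0 := by
    apply Finset.sum_nonpos
    intro j _
    rcases eq_or_ne j k with rfl | hjk
    · rw [X.diag]
      have := hβ.2.1 j
      omega
    · rcases X.offdiag k j (fun h' => hjk h'.symm) with h0 | h1
      · simp [h0]
      · rw [h1]
        have := hβ.2.1 j
        linarith
  omega

lemma sub_single_mem_pos (X : ADE n) {k : Fin n} {β : Fin n → ℤ}
    (hβ : β ∈ X.Pos) (h : X.ip (esingle k) β = 1) : β - esingle k ∈ X.Pos := by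
  have hk := X.coord_pos hβ (by rw [h]; norm_num)
  apply X.mem_Pos
  · intro j
    rcases eq_or_ne j k with rfl | hj
    · simp only [Pi.sub_apply, esingle, Pi.single_eq_same]
      omega
    · simp only [Pi.sub_apply, esingle, Pi.single_apply, if_neg hj]
      have := hβ.2.1 j
      omega
  · rw [ip_expand_sub, hβ.2.2, X.ip_comm β, h, ip_single_self]; norm_num

lemma add_single_mem_pos (X : ADE n) {k : Fin n} {β : Fin n → ℤ}
    (hβ : β ∈ X.Pos) (h : X.ip (esingle k) β = -1) : β + esingle k ∈ X.Pos := by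
  apply X.mem_Pos
  · intro j
    have h1 := hβ.2.1 j
    have h2 : (0:ℤ) ≤ esingle k j := by
      unfold esingle; rw [Pi.single_apply]; split <;> norm_num
    simp only [Pi.add_apply]
    omega
  · rw [ip_expand_add, hβ.2.2, X.ip_comm β, h, ip_single_self]; norm_num

lemma skStar_step (X : ADE n) (k : Fin n) (A : Set (Fin n → ℤ))
    (hA : X.IsClosedSub A) {a b : Fin n → ℤ}
    (ha : a ∈ X.skStar k A) (hb : b ∈ X.skStar k A)
    (hab : a + b ∈ X.Pos)
    (hord : X.ip (esingle k) b ≤ X.ip (esingle k) a) :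
    a + b ∈ X.skStar k A := by
  obtain ⟨hAP, hAc⟩ := hA
  have hαpos : esingle k ∈ X.Pos := X.esingle_mem_pos k
  have hself := X.ip_single_self k
  have hcle : X.ip (esingle k) (a + b) ≤ 2 := X.ip_le_two hself hab.2.2
  have hcge : -1 ≤ X.ip (esingle k) (a + b) := X.neg_one_le_ip hαpos hab
  have hadd : X.ip (esingle k) (a + b) = X.ip (esingle k) a + X.ip (esingle k) b :=
    X.ip_add_right _ _ _
  simp only [skStar, Set.mem_union, Set.mem_singleton_iff, Set.mem_setOf_eq] at ha hb ⊢
  rcases ha with rfl | ⟨haP, ⟨ha1, haA⟩ | ⟨ha0, haA⟩ | ⟨ham, haA, haA'⟩⟩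
  · -- a = α
    rcases hb with rfl | ⟨hbP, ⟨hb1, hbA⟩ | ⟨hb0, hbA⟩ | ⟨hbm, hbA, hbA'⟩⟩
    · exfalso; rw [hself] at hadd; omega
    · exfalso; rw [hself, hb1] at hadd; omega
    · exfalso
      have h2 : X.ip (esingle k) (esingle k + b) = 2 := by rw [hadd, hself, hb0]; norm_num
      have := X.eq_of_ip_eq_two hself hab.2.2 h2
      exact hbP.1 (left_eq_add.mp this)
    · right
      refine ⟨hab, Or.inl ⟨by rw [hadd, hself, hbm]; norm_num, ?_⟩⟩
      rw [add_sub_cancel_left]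
      exact hbA
  · -- ip α a = 1
    rcases hb with rfl | ⟨hbP, ⟨hb1, hbA⟩ | ⟨hb0, hbA⟩ | ⟨hbm, hbA, hbA'⟩⟩
    · exfalso; rw [hself] at hord; omega
    · -- (1,1)
      exfalso
      have h2 : X.ip (esingle k) (a + b) = 2 := by rw [hadd, ha1, hb1]; norm_num
      have heq := X.eq_of_ip_eq_two hself hab.2.2 h2
      have hak := X.coord_pos haP (by rw [ha1]; norm_num)
      have hbk := X.coord_pos hbP (by rw [hb1]; norm_num)
      have hck := congrFun heq k
      simp only [esingle, Pi.single_eq_same, Pi.add_apply] at hck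
      omega
    · -- (1,0)
      have hip : X.ip (esingle k) (a + b) = 1 := by rw [hadd, ha1, hb0]; norm_num
      have hsum : a - esingle k + b = a + b - esingle k := by abel
      have hposc : a + b - esingle k ∈ X.Pos := X.sub_single_mem_pos hab hip
      right
      refine ⟨hab, Or.inl ⟨hip, ?_⟩⟩
      rw [← hsum]
      exact hAc _ haA _ hbA (hsum ▸ hposc)
    · -- (1,-1)
      have hip : X.ip (esingle k) (a + b) = 0 := by rw [hadd, ha1, hbm]; norm_num
      have hsum : a - esingle k + (b + esingle k) = a + b := by abel
      right
      refine ⟨hab, Or.inr (Or.inl ⟨hip, ?_⟩)⟩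
      rw [← hsum]
      exact hAc _ haA _ hbA' (hsum ▸ hab)
  · -- ip α a = 0
    rcases hb with rfl | ⟨hbP, ⟨hb1, hbA⟩ | ⟨hb0, hbA⟩ | ⟨hbm, hbA, hbA'⟩⟩
    · exfalso; rw [hself] at hord; omega
    · exfalso; rw [ha0, hb1] at hord; omega
    · -- (0,0)
      right
      exact ⟨hab, Or.inr (Or.inl ⟨by rw [hadd, ha0, hb0]; norm_num, hAc _ haA _ hbA hab⟩)⟩
    · -- (0,-1)
      have hip : X.ip (esingle k) (a + b) = -1 := by rw [hadd, ha0, hbm]; norm_num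
      have hposc : a + b + esingle k ∈ X.Pos := X.add_single_mem_pos hab hip
      have hsum : a + (b + esingle k) = a + b + esingle k := by abel
      right
      refine ⟨hab, Or.inr (Or.inr ⟨hip, hAc _ haA _ hbA hab, ?_⟩)⟩
      rw [← hsum]
      exact hAc _ haA _ hbA' (hsum ▸ hposc)
  · -- ip α a = -1
    rcases hb with rfl | ⟨hbP, ⟨hb1, hbA⟩ | ⟨hb0, hbA⟩ | ⟨hbm, hbA, hbA'⟩⟩
    · exfalso; rw [hself] at hord; omega
    · exfalso; rw [ham, hb1] at hord; omega
    · exfalso; rw [ham, hb0] at hord; omega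
    · exfalso; rw [hadd, ham, hbm] at hcge; omega

end ADE

/-- If `A ⊆ Φ⁺` is closed, then `s_k * A` is closed, and moreover
`α_k ∈ s_k * A ⊆ {α_k} ∪ r_k(A)`. -/
theorem skStar_closed {n : ℕ} (X : ADE n) (k : Fin n) (A : Set (Fin n → ℤ))
    (hA : X.IsClosedSub A) :
    X.IsClosedSub (X.skStar k A) ∧
    esingle k ∈ X.skStar k A ∧
    X.skStar k A ⊆ {esingle k} ∪ (X.srefl k '' A) := by
  have hαmem : esingle k ∈ X.skStar k A := Or.inl rfl
  refine ⟨⟨?_, ?_⟩, hαmem, ?_⟩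
  · rintro β (rfl | ⟨hβ, -⟩)
    · exact X.esingle_mem_pos k
    · exact hβ
  · intro a ha b hb hab
    rcases le_total (X.ip (esingle k) b) (X.ip (esingle k) a) with h | h
    · exact X.skStar_step k A hA ha hb hab h
    · rw [add_comm]
      exact X.skStar_step k A hA hb ha (add_comm a b ▸ hab) h
  · rintro β (rfl | ⟨hβ, ⟨h1, hm⟩ | ⟨h0, hm⟩ | ⟨hm1, hm, hm'⟩⟩)
    · exact Or.inl rfl
    · right
      refine ⟨β - esingle k, hm, ?_⟩
      have hip : X.ip (esingle k) (β - esingle k) = -1 := by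
        rw [ADE.ip_sub_right, h1, ADE.ip_single_self]; norm_num
      unfold ADE.srefl
      rw [hip]
      module
    · right
      refine ⟨β, hm, ?_⟩
      unfold ADE.srefl
      rw [h0]
      module
    · right
      refine ⟨β + esingle k, hm', ?_⟩
      have hip : X.ip (esingle k) (β + esingle k) = 1 := by
        rw [ADE.ip_add_right, hm1, ADE.ip_single_self]; norm_num
      unfold ADE.srefl
      rw [hip]
      module
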